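/- Let Q^tr ⊆ ℝ be the field of all totally real algebraic numbers and let L = Q^tr(i) ⊆ ℂ, where i = √(−1). Then, with X₀ = {u₁² + u₂² − u₃² − u₄² : u₁, u₂, u₃, u₄ units of R_{2,L}}, X₁ = {d ∈ O_L : 32·d ∈ X₀}, and X = {α ∈ O_L : there exist x₁, x₂ ∈ X₁ with 4·α = x₁ − x₂}, one has X = Z^tr, the ring of all totally real algebraic integers, viewed as a subset of O_L. -/

import Mathlib

open Complex

noncomputable section

/-- The ring of integers of a subfield `L ⊆ ℂ`: the elements of `L` that are integral
over `ℤ`, viewed as a subring of `ℂ`. -/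
def ringOfInt (L : Subfield ℂ) : Subring ℂ where
  carrier := {x : ℂ | x ∈ L ∧ IsIntegral ℤ x}
  zero_mem' := ⟨L.zero_mem, isIntegral_zero⟩
  one_mem' := ⟨L.one_mem, isIntegral_one⟩
  add_mem' := fun hx hy => ⟨L.add_mem hx.1 hy.1, hx.2.add hy.2⟩
  mul_mem' := fun hx hy => ⟨L.mul_mem hx.1 hy.1, hx.2.mul hy.2⟩
  neg_mem' := fun hx => ⟨L.neg_mem hx.1, hx.2.neg⟩

lemma ringOfInt_mem_subfield {L : Subfield ℂ} {x : ℂ} (hx : x ∈ ringOfInt L) : x ∈ L := hx.1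

/-- The underlying set of the ring `R_{m,L} = {x ∈ O_L : ∃ a ∈ O_L, ∃ j, 0 ≤ j < m, x = j + m·a}`. -/
def Rset (m : ℕ) (L : Subfield ℂ) : Set ℂ :=
  {x : ℂ | x ∈ ringOfInt L ∧
    ∃ a ∈ ringOfInt L, ∃ j : ℤ, 0 ≤ j ∧ j < (m : ℤ) ∧ x = (j : ℂ) + (m : ℂ) * a}

lemma Rset_norm {m : ℕ} (hm : m ≠ 0) {L : Subfield ℂ} {x : ℂ} (hx : x ∈ ringOfInt L)
    {a : ℂ} (ha : a ∈ ringOfInt L) {j : ℤ} (h : x = (j : ℂ) + (m : ℂ) * a) :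
    x ∈ Rset m L := by
  have hm' : (0 : ℤ) < m := by exact_mod_cast Nat.pos_of_ne_zero hm
  refine ⟨hx, a + ((j / (m : ℤ) : ℤ) : ℂ), ?_, j % m,
    Int.emod_nonneg j (by exact_mod_cast hm), Int.emod_lt_of_pos j hm', ?_⟩
  · exact (ringOfInt L).add_mem ha (intCast_mem (ringOfInt L) _)
  · have key : ((m : ℤ) * (j / (m : ℤ)) + j % (m : ℤ) : ℤ) = j := Int.mul_ediv_add_emod j m
    have key' := congrArg (Int.cast : ℤ → ℂ) key
    push_cast at key'
    rw [h]
    linear_combination -key'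

/-- The ring `R_{m,L}`, as a subring of `ℂ`. -/
def Rring (m : ℕ) (hm : m ≠ 0) (L : Subfield ℂ) : Subring ℂ where
  carrier := Rset m L
  zero_mem' := Rset_norm hm (ringOfInt L).zero_mem (ringOfInt L).zero_mem (j := 0) (by simp)
  one_mem' := Rset_norm hm (ringOfInt L).one_mem (ringOfInt L).zero_mem (j := 1) (by simp)
  add_mem' := by
    rintro x y ⟨hx, a, ha, j, _, _, rfl⟩ ⟨hy, b, hb, k, _, _, rfl⟩
    exact Rset_norm hm ((ringOfInt L).add_mem hx hy) ((ringOfInt L).add_mem ha hb)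
      (j := j + k) (by push_cast; ring)
  mul_mem' := by
    rintro x y ⟨hx, a, ha, j, _, _, rfl⟩ ⟨hy, b, hb, k, _, _, rfl⟩
    refine Rset_norm hm ((ringOfInt L).mul_mem hx hy)
      (a := (j : ℂ) * b + (k : ℂ) * a + (m : ℂ) * (a * b)) ?_ (j := j * k) (by push_cast; ring)
    exact (ringOfInt L).add_mem
      ((ringOfInt L).add_mem ((ringOfInt L).mul_mem (intCast_mem _ j) hb)
        ((ringOfInt L).mul_mem (intCast_mem _ k) ha))
      ((ringOfInt L).mul_mem (natCast_mem _ m) ((ringOfInt L).mul_mem ha hb))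
  neg_mem' := by
    rintro x ⟨hx, a, ha, j, _, _, rfl⟩
    exact Rset_norm hm ((ringOfInt L).neg_mem hx) ((ringOfInt L).neg_mem ha)
      (j := -j) (by push_cast; ring)

lemma twoNZ : (2 : ℕ) ≠ 0 := by norm_num

/-- A subfield of `ℂ` is totally real if every embedding into `ℂ` has real image. -/
def IsTotallyRealSubfield (K : Subfield ℂ) : Prop :=
  ∀ (σ : K →+* ℂ) (x : K), (σ x).im = 0

/-- A subfield of `ℂ` is totally imaginary if no embedding into `ℂ` has real image. -/
def IsTotallyImaginarySubfield (L : Subfield ℂ) : Prop :=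
  ∀ σ : L →+* ℂ, ∃ x : L, (σ x).im ≠ 0

/-- `L` is a totally imaginary quadratic extension of the totally real field `K`:
`K ⊆ L ⊆ ℂ` are algebraic over `ℚ`, `L` is closed under complex conjugation,
`[L : K] = 2`, `K` is totally real and `L` is totally imaginary. -/
structure IsTIQExt (K L : Subfield ℂ) : Prop where
  le : K ≤ L
  alg : ∀ x : L, IsAlgebraic ℚ (x : ℂ)
  conj_closed : ∀ x ∈ L, (starRingEnd ℂ) x ∈ L
  tot_real : IsTotallyRealSubfield K
  tot_imaginary : IsTotallyImaginarySubfield L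
  deg : letI := (Subfield.inclusion le).toAlgebra; Module.finrank K L = 2

/-- An algebraic number `α ∈ ℂ` is totally real if all complex roots of its minimal
polynomial over `ℚ` are real. -/
def TotallyRealNum (α : ℂ) : Prop :=
  IsAlgebraic ℚ α ∧ ∀ z : ℂ, Polynomial.aeval z (minpoly ℚ α) = 0 → z.im = 0

/-- The set `X₀ = {u₁² + u₂² − u₃² − u₄² : uᵢ ∈ R_{2,L}ˣ}`. -/
def X0 (L : Subfield ℂ) : Set ℂ :=
  {x : ℂ | ∃ u₁ u₂ u₃ u₄ : (Rring 2 twoNZ L)ˣ,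
    x = ((u₁ : Rring 2 twoNZ L) : ℂ) ^ 2 + ((u₂ : Rring 2 twoNZ L) : ℂ) ^ 2
      - ((u₃ : Rring 2 twoNZ L) : ℂ) ^ 2 - ((u₄ : Rring 2 twoNZ L) : ℂ) ^ 2}

/-- The set `X₁ = {d ∈ O_L : 32·d ∈ X₀}`. -/
def X1 (L : Subfield ℂ) : Set ℂ :=
  {d : ℂ | d ∈ ringOfInt L ∧ 32 * d ∈ X0 L}

/-- The set `X = {α ∈ O_L : ∃ x₁, x₂ ∈ X₁, 4·α = x₁ − x₂}`. -/
def XX (L : Subfield ℂ) : Set ℂ :=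
  {α : ℂ | α ∈ ringOfInt L ∧ ∃ x₁ ∈ X1 L, ∃ x₂ ∈ X1 L, 4 * α = x₁ - x₂}

/-- The set of all totally real algebraic numbers (the field `ℚ^tr`). -/
def QtrSet : Set ℂ := {z : ℂ | TotallyRealNum z}

/-- The field `ℚ^tr(i)`, the subfield of `ℂ` generated by all totally real numbers and `i`. -/
def QtrI : Subfield ℂ := Subfield.closure (QtrSet ∪ {Complex.I})



-- ===================== auxiliary infrastructure =====================

open IntermediateField Polynomial in
lemma exists_emb {S : Set ℂ} (hS : ∀ s ∈ S, IsAlgebraic ℚ s) {x : ℂ}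
    (hx : x ∈ IntermediateField.adjoin ℚ S) {y : ℂ}
    (hy : Polynomial.aeval y (minpoly ℚ x) = 0) :
    ∃ φ : (IntermediateField.adjoin ℚ S) →ₐ[ℚ] ℂ, φ ⟨x, hx⟩ = y :=
  IntermediateField.exists_algHom_adjoin_of_splits_of_aeval
    (fun s hs => ⟨(hS s hs).isIntegral, IsAlgClosed.splits _⟩) hx hy

lemma minpoly_sub {M : IntermediateField ℚ ℂ} {a : ℂ} (haM : a ∈ M) :
    minpoly ℚ (⟨a, haM⟩ : M) = minpoly ℚ a :=
  (minpoly.algHom_eq M.val Subtype.val_injective (⟨a, haM⟩ : M)).symm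

lemma emb_real {M : IntermediateField ℚ ℂ} (σ : M →ₐ[ℚ] ℂ) {a : ℂ}
    (ha : TotallyRealNum a) (haM : a ∈ M) : (σ ⟨a, haM⟩).im = 0 := by
  apply ha.2
  rw [← minpoly_sub haM, Polynomial.aeval_algHom_apply, minpoly.aeval, map_zero]

lemma tr_im_zero {a : ℂ} (ha : TotallyRealNum a) : a.im = 0 :=
  ha.2 a (by rw [minpoly.aeval])

lemma tr_of_embs {S : Set ℂ} (hS : ∀ s ∈ S, IsAlgebraic ℚ s) {x : ℂ}
    (hx : x ∈ IntermediateField.adjoin ℚ S)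
    (h : ∀ σ : (IntermediateField.adjoin ℚ S) →ₐ[ℚ] ℂ, (σ ⟨x, hx⟩).im = 0) :
    TotallyRealNum x := by
  have halg : Algebra.IsAlgebraic ℚ (IntermediateField.adjoin ℚ S) :=
    IntermediateField.isAlgebraic_adjoin (fun s hs => (hS s hs).isIntegral)
  constructor
  · have h1 := Algebra.IsAlgebraic.isAlgebraic (R := ℚ)
      (⟨x, hx⟩ : IntermediateField.adjoin ℚ S)
    have h2 := h1.algebraMap (A := ℂ)
    simpa using h2
  · intro z hz
    obtain ⟨φ, hφ⟩ := exists_emb hS hx hz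
    rw [← hφ]; exact h φ

lemma tr_ratCast (q : ℚ) : TotallyRealNum (q : ℂ) := by
  refine ⟨isAlgebraic_algebraMap q, fun z hz => ?_⟩
  have h1 : minpoly ℚ ((q : ℚ) : ℂ) = Polynomial.X - Polynomial.C q := by
    simpa using minpoly.eq_X_sub_C ℂ (q : ℚ)
  rw [h1] at hz
  simp only [Polynomial.aeval_X, Polynomial.aeval_C, map_sub, sub_eq_zero] at hz
  simp [hz]

lemma tr_zero : TotallyRealNum 0 := by simpa using tr_ratCast 0
lemma tr_one : TotallyRealNum 1 := by simpa using tr_ratCast 1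

lemma tr_mem_adjoin {S : Set ℂ} {a : ℂ} (ha : a ∈ S) : a ∈ IntermediateField.adjoin ℚ S :=
  IntermediateField.subset_adjoin ℚ S ha

lemma TotallyRealNum.add {a b : ℂ} (ha : TotallyRealNum a) (hb : TotallyRealNum b) :
    TotallyRealNum (a + b) := by
  have hS : ∀ s ∈ ({a, b} : Set ℂ), IsAlgebraic ℚ s := by
    rintro s (rfl | rfl); exacts [ha.1, hb.1]
  have hma : a ∈ IntermediateField.adjoin ℚ ({a, b} : Set ℂ) := tr_mem_adjoin (by simp)
  have hmb : b ∈ IntermediateField.adjoin ℚ ({a, b} : Set ℂ) := tr_mem_adjoin (by simp)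
  refine tr_of_embs hS (add_mem hma hmb) (fun σ => ?_)
  have h1 : (⟨a + b, add_mem hma hmb⟩ : IntermediateField.adjoin ℚ ({a, b} : Set ℂ))
      = ⟨a, hma⟩ + ⟨b, hmb⟩ := rfl
  rw [h1, map_add, Complex.add_im, emb_real σ ha hma, emb_real σ hb hmb, add_zero]

lemma TotallyRealNum.mul {a b : ℂ} (ha : TotallyRealNum a) (hb : TotallyRealNum b) :
    TotallyRealNum (a * b) := by
  have hS : ∀ s ∈ ({a, b} : Set ℂ), IsAlgebraic ℚ s := by
    rintro s (rfl | rfl); exacts [ha.1, hb.1]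
  have hma : a ∈ IntermediateField.adjoin ℚ ({a, b} : Set ℂ) := tr_mem_adjoin (by simp)
  have hmb : b ∈ IntermediateField.adjoin ℚ ({a, b} : Set ℂ) := tr_mem_adjoin (by simp)
  refine tr_of_embs hS (mul_mem hma hmb) (fun σ => ?_)
  have h1 : (⟨a * b, mul_mem hma hmb⟩ : IntermediateField.adjoin ℚ ({a, b} : Set ℂ))
      = ⟨a, hma⟩ * ⟨b, hmb⟩ := rfl
  rw [h1, map_mul, Complex.mul_im, emb_real σ ha hma, emb_real σ hb hmb]
  ring

lemma TotallyRealNum.neg {a : ℂ} (ha : TotallyRealNum a) : TotallyRealNum (-a) := by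
  have := ha.mul (tr_ratCast (-1))
  simpa using this

lemma TotallyRealNum.inv {a : ℂ} (ha : TotallyRealNum a) : TotallyRealNum a⁻¹ := by
  have hS : ∀ s ∈ ({a} : Set ℂ), IsAlgebraic ℚ s := by rintro s rfl; exact ha.1
  have hma : a ∈ IntermediateField.adjoin ℚ ({a} : Set ℂ) := tr_mem_adjoin rfl
  refine tr_of_embs hS (inv_mem hma) (fun σ => ?_)
  have h1 : (⟨a⁻¹, inv_mem hma⟩ : IntermediateField.adjoin ℚ ({a} : Set ℂ)) = (⟨a, hma⟩)⁻¹ := rfl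
  rw [h1, map_inv₀, Complex.inv_im, emb_real σ ha hma]
  simp

lemma TotallyRealNum.sub {a b : ℂ} (ha : TotallyRealNum a) (hb : TotallyRealNum b) :
    TotallyRealNum (a - b) := by
  simpa [sub_eq_add_neg] using ha.add hb.neg

lemma tr_intCast (n : ℤ) : TotallyRealNum (n : ℂ) := by simpa using tr_ratCast n

lemma tr_ofNat (n : ℕ) : TotallyRealNum (n : ℂ) := by simpa using tr_ratCast n

-- ===================== integrality helpers =====================

lemma integral_of_quadratic {b c x : ℂ} (hb : IsIntegral ℤ b) (hc : IsIntegral ℤ c)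
    (h : x ^ 2 + b * x + c = 0) : IsIntegral ℤ x := by
  let A := integralClosure ℤ ℂ
  have hx : IsIntegral A x := by
    refine ⟨Polynomial.X ^ 2 + Polynomial.C (⟨b, hb⟩ : A) * Polynomial.X
      + Polynomial.C (⟨c, hc⟩ : A), ?_, ?_⟩
    · rw [add_assoc]
      apply Polynomial.monic_X_pow_add (n := 2)
      have h1 : (Polynomial.C (⟨b, hb⟩ : A) * Polynomial.X).degree ≤ 1 :=
        Polynomial.degree_C_mul_X_le (⟨b, hb⟩ : A)
      have h2 : (Polynomial.C (⟨c, hc⟩ : A)).degree ≤ 1 :=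
        le_trans Polynomial.degree_C_le (by norm_num)
      refine lt_of_le_of_lt (Polynomial.degree_add_le _ _) ?_
      refine lt_of_le_of_lt (max_le h1 h2) ?_
      norm_num
    · simp only [Polynomial.eval₂_add, Polynomial.eval₂_pow, Polynomial.eval₂_X,
        Polynomial.eval₂_mul, Polynomial.eval₂_C]
      show x ^ 2 + (algebraMap A ℂ ⟨b, hb⟩) * x + (algebraMap A ℂ ⟨c, hc⟩) = 0
      exact h
  exact isIntegral_trans (A := A) x hx

lemma half_not_integral : ¬ IsIntegral ℤ ((2 : ℂ)⁻¹) := by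
  intro h
  have h1 : ((2⁻¹ : ℚ) : ℂ) = (2 : ℂ)⁻¹ := by push_cast; ring
  have h2 : IsIntegral ℤ ((2⁻¹ : ℚ) : ℂ) := h1 ▸ h
  have h3 : IsIntegral ℤ (2⁻¹ : ℚ) := by
    rwa [show ((2⁻¹ : ℚ) : ℂ) = algebraMap ℚ ℂ (2⁻¹ : ℚ) from rfl,
      isIntegral_algebraMap_iff (algebraMap ℚ ℂ).injective] at h2
  obtain ⟨n, hn⟩ := IsIntegrallyClosed.isIntegral_iff.mp h3
  have h4 : (n : ℚ) * 2 = 1 := by rw [show ((n:ℚ)) = 2⁻¹ from hn]; norm_num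
  have h5 : (n * 2 : ℤ) = 1 := by exact_mod_cast h4
  omega

lemma int_int (n : ℤ) : IsIntegral ℤ ((n:ℤ) : ℂ) := by
  have := isIntegral_algebraMap (R := ℤ) (A := ℂ) (x := n)
  simpa using this

lemma alg_of_int {x : ℂ} (h : IsIntegral ℤ x) : IsAlgebraic ℚ x :=
  (h.tower_top (A := ℚ)).isAlgebraic

lemma myIntegral_conj {z : ℂ} (hz : IsIntegral ℤ z) : IsIntegral ℤ ((starRingEnd ℂ) z) :=
  hz.map ((starRingEnd ℂ).toIntAlgHom)

-- ===================== small complex-number facts =====================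

lemma sq_real_pos_real {z : ℂ} (him : (z^2).im = 0) (hre : 0 < (z^2).re) : z.im = 0 := by
  have h2 : z^2 = z * z := sq z
  rw [h2] at him hre
  simp only [Complex.mul_im, Complex.mul_re] at him hre
  by_contra h
  have h1 : z.re * z.im = 0 := by linarith
  rcases mul_eq_zero.mp h1 with h2 | h2
  · nlinarith
  · exact h h2

lemma sq_neg_one_re {J : ℂ} (hJ : J^2 = -1) : J.re = 0 := by
  have h2 : J^2 = J * J := sq J
  rw [h2] at hJ
  have him : (J*J).im = 0 := by rw [hJ]; simp
  have hre : (J*J).re = -1 := by rw [hJ]; simp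
  simp only [Complex.mul_im, Complex.mul_re] at him hre
  by_contra h
  have h1 : J.re * J.im = 0 := by linarith
  rcases mul_eq_zero.mp h1 with h2 | h2
  · exact h h2
  · nlinarith

lemma conj_of_sq_neg_one {J : ℂ} (hJ : J^2 = -1) : (starRingEnd ℂ) J = -J := by
  have h := sq_neg_one_re hJ
  apply Complex.ext <;> simp [h]

lemma inv_im_zero {z : ℂ} (h : z.im = 0) : (z⁻¹).im = 0 := by
  rw [Complex.inv_im, h]; simp

-- ===================== Kronecker-type bound =====================

def Complex.abs : AbsoluteValue ℂ ℝ := IsAbsoluteValue.toAbsoluteValue (norm : ℂ → ℝ)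

@[simp] lemma Complex.abs_apply (z : ℂ) : Complex.abs z = ‖z‖ := rfl

lemma Complex.abs_intCast (n : ℤ) : Complex.abs (n : ℂ) = |(n : ℝ)| := by simp

lemma Complex.abs_conj (z : ℂ) : Complex.abs ((starRingEnd ℂ) z) = Complex.abs z := by simp

lemma Complex.sq_abs (z : ℂ) : Complex.abs z ^ 2 = Complex.normSq z := by
  simp [Complex.sq_norm]


open Polynomial in
lemma kronecker {m : ℂ} (him : IsIntegral ℤ m) (hm : m ≠ 0)
    (hb : ∀ z : ℂ, Polynomial.aeval z (minpoly ℚ m) = 0 → Complex.abs z ≤ 1) :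
    Complex.abs m = 1 := by
  have prod_abs_le_one : ∀ (s : Multiset ℂ), (∀ r ∈ s, Complex.abs r ≤ 1) →
      (s.map Complex.abs).prod ≤ 1 := by
    intro s
    induction s using Multiset.induction with
    | empty => intro _; simp
    | cons a t ih =>
      intro h
      simp only [Multiset.map_cons, Multiset.prod_cons]
      have ha := h a (Multiset.mem_cons_self a t)
      have ht := ih (fun r hr => h r (Multiset.mem_cons_of_mem hr))
      calc Complex.abs a * (t.map Complex.abs).prod ≤ 1 * 1 := by
            apply mul_le_mul ha ht (Multiset.prod_nonneg ?_) zero_le_one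
            intro x hx
            obtain ⟨y, _, rfl⟩ := Multiset.mem_map.mp hx
            exact AbsoluteValue.nonneg _ y
        _ = 1 := by norm_num
  have hmQ : IsIntegral ℚ m := him.tower_top
  set P : ℚ[X] := minpoly ℚ m with hP
  set Pc : ℂ[X] := P.map (algebraMap ℚ ℂ) with hPc
  have hmonic : Pc.Monic := (minpoly.monic hmQ).map _
  have hsplits : Pc.Splits := IsAlgClosed.splits Pc
  have heq : Pc = (Pc.roots.map (fun r => X - C r)).prod :=
    hsplits.eq_prod_roots_of_monic hmonic
  have hroot : ∀ r ∈ Pc.roots, Polynomial.aeval r P = 0 := by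
    intro r hr
    have h1 := Polynomial.isRoot_of_mem_roots hr
    rwa [Polynomial.IsRoot.def, hPc, Polynomial.eval_map, ← Polynomial.aeval_def] at h1
  have hmroot : m ∈ Pc.roots := by
    rw [Polynomial.mem_roots (hmonic.ne_zero)]
    rw [Polynomial.IsRoot.def, hPc, Polynomial.eval_map, ← Polynomial.aeval_def,
        minpoly.aeval]
  have hcoeff : (1 : ℝ) ≤ Complex.abs (Pc.coeff 0) := by
    have h1 : P = (minpoly ℤ m).map (algebraMap ℤ ℚ) :=
      minpoly.isIntegrallyClosed_eq_field_fractions ℚ ℂ him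
    have h2 : P.coeff 0 = ((minpoly ℤ m).coeff 0 : ℚ) := by
      rw [h1, Polynomial.coeff_map]; rfl
    have h3 : P.coeff 0 ≠ 0 := minpoly.coeff_zero_ne_zero hmQ hm
    have h4 : (minpoly ℤ m).coeff 0 ≠ 0 := by
      intro h; rw [h2, h] at h3; simp at h3
    have h5 : (1 : ℤ) ≤ |(minpoly ℤ m).coeff 0| := Int.one_le_abs h4
    have h6 : Pc.coeff 0 = (((minpoly ℤ m).coeff 0 : ℤ) : ℂ) := by
      rw [hPc, Polynomial.coeff_map, h2, eq_ratCast (algebraMap ℚ ℂ)]; push_cast; ring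
    rw [h6, Complex.abs_intCast]
    exact_mod_cast h5
  have hprod : (Pc.roots.map Complex.abs).prod = Complex.abs (Pc.coeff 0) := by
    have he : Pc.coeff 0 = Pc.eval 0 := (Polynomial.coeff_zero_eq_eval_zero Pc)
    have he0 : Pc.eval 0 = ((Pc.roots.map (fun r => X - C r)).prod).eval 0 := by rw [← heq]
    rw [Polynomial.eval_multiset_prod, Multiset.map_map] at he0
    rw [he, he0, map_multiset_prod, Multiset.map_map]
    congr 1; apply Multiset.map_congr rfl; intro r _; simp
  obtain ⟨t, ht⟩ : ∃ t, Pc.roots = m ::ₘ t := ⟨Pc.roots.erase m, (Multiset.cons_erase hmroot).symm⟩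
  have hrest : (t.map Complex.abs).prod ≤ 1 := by
    apply prod_abs_le_one
    intro r hr
    exact hb r (hroot r (by rw [ht]; exact Multiset.mem_cons_of_mem hr))
  have habs_le : Complex.abs m ≤ 1 := hb m (minpoly.aeval ℚ m)
  have hge : (1 : ℝ) ≤ Complex.abs m * (t.map Complex.abs).prod := by
    have hh : (Pc.roots.map Complex.abs).prod = Complex.abs m * (t.map Complex.abs).prod := by
      rw [ht]; simp
    rw [hh] at hprod
    rw [hprod]
    exact hcoeff
  have hmul : Complex.abs m * (t.map Complex.abs).prod ≤ Complex.abs m * 1 :=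
    mul_le_mul_of_nonneg_left hrest (AbsoluteValue.nonneg _ _)
  have h1le : (1:ℝ) ≤ Complex.abs m := by
    calc (1:ℝ) ≤ Complex.abs m * (t.map Complex.abs).prod := hge
      _ ≤ Complex.abs m * 1 := hmul
      _ = Complex.abs m := mul_one _
  linarith

-- ===================== square roots of 4μ²+1 =====================

lemma sqrt_special {μ : ℂ} (hμ : TotallyRealNum μ) (hint : IsIntegral ℤ μ) :
    ∃ h : ℂ, h ^ 2 = 4 * μ ^ 2 + 1 ∧ TotallyRealNum h ∧ IsIntegral ℤ h := by
  have hμim : μ.im = 0 := tr_im_zero hμ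
  have hcre_pos : (0:ℝ) < 4 * μ.re ^ 2 + 1 := by positivity
  have hcim : (4 * μ ^ 2 + 1 : ℂ) = ((4 * μ.re ^ 2 + 1 : ℝ) : ℂ) := by
    apply Complex.ext <;>
      simp [pow_two, Complex.add_re, Complex.add_im, Complex.mul_re, Complex.mul_im, hμim]
  set h : ℂ := ((Real.sqrt (4 * μ.re ^ 2 + 1) : ℝ) : ℂ) with hh
  have hsq : h ^ 2 = 4 * μ ^ 2 + 1 := by
    rw [hh, ← Complex.ofReal_pow, Real.sq_sqrt (le_of_lt hcre_pos), ← hcim]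
  have hint2 : IsIntegral ℤ (h^2) := by
    rw [hsq]
    exact (((int_int 4).mul (hint.pow 2)).add isIntegral_one)
  have hinth : IsIntegral ℤ h := IsIntegral.of_pow (by norm_num) hint2
  refine ⟨h, hsq, ?_, hinth⟩
  have hS : ∀ s ∈ ({μ, h} : Set ℂ), IsAlgebraic ℚ s := by
    rintro s (rfl | rfl)
    · exact hμ.1
    · exact alg_of_int hinth
  have hmμ : μ ∈ IntermediateField.adjoin ℚ ({μ, h} : Set ℂ) :=
    IntermediateField.subset_adjoin ℚ _ (by simp)
  have hmh : h ∈ IntermediateField.adjoin ℚ ({μ, h} : Set ℂ) :=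
    IntermediateField.subset_adjoin ℚ _ (by simp)
  refine tr_of_embs hS hmh (fun σ => ?_)
  have hrel : (⟨h, hmh⟩ : IntermediateField.adjoin ℚ ({μ, h} : Set ℂ)) ^ 2
      = 4 * ⟨μ, hmμ⟩ ^ 2 + 1 := by
    apply Subtype.ext
    push_cast
    exact hsq
  have hA := emb_real σ hμ hmμ
  set A := σ ⟨μ, hmμ⟩ with hA'
  have hσsq : (σ ⟨h, hmh⟩) ^ 2 = 4 * A ^ 2 + 1 := by
    rw [← map_pow, hrel, map_add, map_mul, map_pow, map_one, map_ofNat]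
  apply sq_real_pos_real (z := σ ⟨h, hmh⟩) <;> rw [hσsq]
  · simp [pow_two, Complex.add_im, Complex.mul_re, Complex.mul_im, hA]
  · have h1 : (4 * A ^ 2 + 1).re = 4 * A.re^2 + 1 := by
      simp [pow_two, Complex.add_re, Complex.mul_re, Complex.mul_im, hA]
    rw [h1]; positivity

-- ===================== membership in Q^tr(i) =====================

lemma tr_mem_QtrI {a : ℂ} (ha : TotallyRealNum a) : a ∈ QtrI :=
  Subfield.subset_closure (Or.inl ha)

lemma I_mem_QtrI : Complex.I ∈ QtrI := Subfield.subset_closure (Or.inr rfl)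

/-- structure of `ℚ^tr(i)` : every element is `a + b i` with `a, b` totally real -/
lemma QtrI_struct {x : ℂ} (hx : x ∈ QtrI) :
    ∃ a b : ℂ, TotallyRealNum a ∧ TotallyRealNum b ∧ x = a + b * Complex.I := by
  induction hx using Subfield.closure_induction with
  | mem y hy =>
    rcases hy with hy | hy
    · exact ⟨y, 0, hy, tr_zero, by ring⟩
    · exact ⟨0, 1, tr_zero, tr_one, by simp only [Set.mem_singleton_iff] at hy; rw [hy]; ring⟩
  | one => exact ⟨1, 0, tr_one, tr_zero, by ring⟩
  | add x y hx hy ihx ihy =>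
    obtain ⟨a, b, ha, hb, rfl⟩ := ihx
    obtain ⟨c, d, hc, hd, rfl⟩ := ihy
    exact ⟨a + c, b + d, ha.add hc, hb.add hd, by ring⟩
  | neg x hx ihx =>
    obtain ⟨a, b, ha, hb, rfl⟩ := ihx
    exact ⟨-a, -b, ha.neg, hb.neg, by ring⟩
  | mul x y hx hy ihx ihy =>
    obtain ⟨a, b, ha, hb, rfl⟩ := ihx
    obtain ⟨c, d, hc, hd, rfl⟩ := ihy
    exact ⟨a * c - b * d, a * d + b * c, (ha.mul hc).sub (hb.mul hd),
      (ha.mul hd).add (hb.mul hc), by linear_combination (b*d) * Complex.I_mul_I⟩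
  | inv x hx ihx =>
    obtain ⟨a, b, ha, hb, rfl⟩ := ihx
    by_cases hab : a + b * Complex.I = 0
    · refine ⟨0, 0, tr_zero, tr_zero, by rw [hab]; simp⟩
    · have haim := tr_im_zero ha
      have hbim := tr_im_zero hb
      have hab2 : a * a + b * b ≠ 0 := by
        intro h0
        apply hab
        have ha' : a = (a.re : ℂ) := Complex.ext rfl (by simp [haim])
        have hb' : b = (b.re : ℂ) := Complex.ext rfl (by simp [hbim])
        rw [ha', hb'] at h0 ⊢
        have h1 : (a.re ^ 2 + b.re ^ 2 : ℂ) = 0 := by linear_combination h0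
        have h2 : a.re ^ 2 + b.re ^ 2 = 0 := by exact_mod_cast h1
        have ha0 : a.re = 0 := by nlinarith [sq_nonneg a.re, sq_nonneg b.re]
        have hb0 : b.re = 0 := by nlinarith [sq_nonneg a.re, sq_nonneg b.re]
        simp [ha0, hb0]
      set sden := a*a + b*b with hsden
      have hdiv : ∀ u v : ℂ, TotallyRealNum u → TotallyRealNum v → TotallyRealNum (u / v) :=
        fun u v hu hv => by rw [div_eq_mul_inv]; exact hu.mul hv.inv
      have hmul1 : (a + b * Complex.I) * (a / sden + (-b / sden) * Complex.I) = 1 := by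
        have expand : (a + b * Complex.I) * (a / sden + (-b / sden) * Complex.I)
            = (a*a - b*b*(Complex.I*Complex.I)) / sden := by ring
        rw [expand, Complex.I_mul_I]
        field_simp
        rw [hsden]; ring
      exact ⟨a / sden, -b / sden, hdiv a sden ha ((ha.mul ha).add (hb.mul hb)),
        hdiv (-b) sden hb.neg ((ha.mul ha).add (hb.mul hb)),
        (inv_eq_of_mul_eq_one_right hmul1)⟩

lemma real_of_QtrI {x : ℂ} (hx : x ∈ QtrI) (him : x.im = 0) : TotallyRealNum x := by
  obtain ⟨a, b, ha, hb, rfl⟩ := QtrI_struct hx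
  have haim := tr_im_zero ha
  have hbim := tr_im_zero hb
  have hb0 : b = 0 := by
    have h1 : (a + b * Complex.I).im = b.re := by
      simp [Complex.add_im, Complex.mul_im, haim, hbim]
    apply Complex.ext <;> simp [hbim]
    rw [h1] at him; exact him
  rw [hb0]
  simpa using ha

-- ===================== units of R_{2,L} have real squares =====================

lemma unit_rep {x y : ℂ} (hx : x ∈ Rset 2 QtrI) (hxy : x * y = 1) (hy : IsIntegral ℤ y) :
    ∃ a, a ∈ ringOfInt QtrI ∧ x = 1 + 2 * a := by
  obtain ⟨hxO, a, ha, j, hj0, hj2, hrep⟩ := hx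
  interval_cases j
  · exfalso
    apply half_not_integral
    have hx2 : x = 2 * a := by rw [hrep]; push_cast; ring
    have h1 : (2:ℂ) * (a * y) = 1 := by rw [← mul_assoc, ← hx2]; exact hxy
    have h2 : (2:ℂ)⁻¹ = a * y := inv_eq_of_mul_eq_one_right h1
    rw [h2]
    exact ha.2.mul hy
  · exact ⟨a, ha, by rw [hrep]; push_cast; ring⟩

lemma unit_sq_real (u : (Rring 2 twoNZ QtrI)ˣ) :
    ((((u : Rring 2 twoNZ QtrI) : ℂ))^2).im = 0 := by
  set U : ℂ := ((u : Rring 2 twoNZ QtrI) : ℂ) with hUdef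
  set V : ℂ := (((u⁻¹ : (Rring 2 twoNZ QtrI)ˣ) : Rring 2 twoNZ QtrI) : ℂ) with hVdef
  have hUV : U * V = 1 := congrArg Subtype.val u.mul_inv
  have hUmem : U ∈ Rset 2 QtrI := (u : Rring 2 twoNZ QtrI).2
  have hVmem : V ∈ Rset 2 QtrI := ((u⁻¹ : (Rring 2 twoNZ QtrI)ˣ) : Rring 2 twoNZ QtrI).2
  have hUint : IsIntegral ℤ U := hUmem.1.2
  have hVint : IsIntegral ℤ V := hVmem.1.2
  have hU0 : U ≠ 0 := left_ne_zero_of_mul_eq_one hUV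
  obtain ⟨a, ha, hUrep⟩ := unit_rep hUmem hUV hVint
  obtain ⟨a', ha', hVrep⟩ := unit_rep hVmem (by rw [mul_comm]; exact hUV) hUint
  obtain ⟨s, t, hs, ht, hUst⟩ := QtrI_struct hUmem.1.1
  obtain ⟨s', t', hs', ht', hVst⟩ := QtrI_struct hVmem.1.1
  have hsim := tr_im_zero hs
  have htim := tr_im_zero ht
  have hs'im := tr_im_zero hs'
  have ht'im := tr_im_zero ht'
  have hconjV : (starRingEnd ℂ) V = s' - t' * Complex.I := by
    rw [hVst, map_add, map_mul, Complex.conj_I,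
      Complex.conj_eq_iff_im.mpr hs'im, Complex.conj_eq_iff_im.mpr ht'im]
    ring
  set ρ : ℂ := U * ((starRingEnd ℂ) V) with hρdef
  set m : ℂ := (ρ - 1) / 2 with hmdef
  have hρm : ρ = 1 + 2 * m := by rw [hmdef]; ring
  have hconjV2 : (starRingEnd ℂ) V = 1 + 2 * ((starRingEnd ℂ) a') := by
    rw [hVrep]; push_cast [map_add, map_mul, map_one, map_ofNat]; ring
  have hmint : IsIntegral ℤ m := by
    have hm2 : m = a + (starRingEnd ℂ) a' + 2 * (a * (starRingEnd ℂ) a') := by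
      rw [hmdef, hρdef, hUrep, hconjV2]; ring
    rw [hm2]
    exact (ha.2.add (myIntegral_conj ha'.2)).add
      ((int_int 2).mul (ha.2.mul (myIntegral_conj ha'.2)))
  -- the ambient number field
  set S : Set ℂ := {s, t, s', t', Complex.I} with hSdef
  have hIint : IsIntegral ℤ Complex.I := by
    apply IsIntegral.of_pow (n := 2) (by norm_num)
    rw [Complex.I_sq]
    exact isIntegral_one.neg
  have hS : ∀ z ∈ S, IsAlgebraic ℚ z := by
    rintro z (rfl | rfl | rfl | rfl | rfl)
    exacts [hs.1, ht.1, hs'.1, ht'.1, alg_of_int hIint]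
  set M := IntermediateField.adjoin ℚ S with hMdef
  have hsM : s ∈ M := IntermediateField.subset_adjoin ℚ _ (by simp [hSdef])
  have htM : t ∈ M := IntermediateField.subset_adjoin ℚ _ (by simp [hSdef])
  have hs'M : s' ∈ M := IntermediateField.subset_adjoin ℚ _ (by simp [hSdef])
  have ht'M : t' ∈ M := IntermediateField.subset_adjoin ℚ _ (by simp [hSdef])
  have hIM : Complex.I ∈ M := IntermediateField.subset_adjoin ℚ _ (by simp [hSdef])
  have hUM : U ∈ M := by rw [hUst]; exact add_mem hsM (mul_mem htM hIM)
  have hVM : V ∈ M := by rw [hVst]; exact add_mem hs'M (mul_mem ht'M hIM)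
  have hcVM : (starRingEnd ℂ) V ∈ M := by rw [hconjV]; exact sub_mem hs'M (mul_mem ht'M hIM)
  have hρM : ρ ∈ M := mul_mem hUM hcVM
  have hmM : m ∈ M := by
    rw [hmdef]
    exact div_mem (sub_mem hρM (one_mem M)) (by exact_mod_cast natCast_mem M 2)
  -- modulus of σ ρ is 1 for every embedding σ
  have hbound : ∀ σ : M →ₐ[ℚ] ℂ, Complex.abs (σ ⟨ρ, hρM⟩) = 1 := by
    intro σ
    set A := σ ⟨s, hsM⟩
    set B := σ ⟨t, htM⟩
    set A' := σ ⟨s', hs'M⟩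
    set B' := σ ⟨t', ht'M⟩
    set J := σ ⟨Complex.I, hIM⟩ with hJdef
    have hA := emb_real σ hs hsM
    have hB := emb_real σ ht htM
    have hA' := emb_real σ hs' hs'M
    have hB' := emb_real σ ht' ht'M
    have hJ2 : J ^ 2 = -1 := by
      have h1 : (⟨Complex.I, hIM⟩ : M) ^ 2 = -1 := by
        apply Subtype.ext; push_cast; exact Complex.I_sq
      rw [hJdef, ← map_pow, h1, map_neg, map_one]
    have hρfac : (⟨ρ, hρM⟩ : M) = (⟨s, hsM⟩ + ⟨t, htM⟩ * ⟨Complex.I, hIM⟩)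
        * (⟨s', hs'M⟩ - ⟨t', ht'M⟩ * ⟨Complex.I, hIM⟩) := by
      apply Subtype.ext; push_cast; rw [hρdef, hUst, hconjV]
    have h1fac : ((⟨s, hsM⟩ + ⟨t, htM⟩ * ⟨Complex.I, hIM⟩)
        * (⟨s', hs'M⟩ + ⟨t', ht'M⟩ * ⟨Complex.I, hIM⟩) : M) = 1 := by
      apply Subtype.ext; push_cast; rw [← hUst, ← hVst]; exact hUV
    have hσρ : σ ⟨ρ, hρM⟩ = (A + B * J) * (A' - B' * J) := by
      rw [hρfac, map_mul, map_add, map_sub, map_mul, map_mul]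
    have hσ1 : (A + B * J) * (A' + B' * J) = 1 := by
      have := congrArg σ h1fac
      rwa [map_mul, map_add, map_add, map_mul, map_mul, map_one] at this
    have hconj : (starRingEnd ℂ) (A' + B' * J) = A' - B' * J := by
      rw [map_add, map_mul, conj_of_sq_neg_one hJ2,
        Complex.conj_eq_iff_im.mpr hA', Complex.conj_eq_iff_im.mpr hB']
      ring
    rw [hσρ, ← hconj, map_mul, Complex.abs_conj, ← map_mul Complex.abs, hσ1, map_one]
  -- finish by cases on m
  by_cases hm0 : m = 0
  · have hρ1 : ρ = 1 := by rw [hρm, hm0]; ring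
    have hcVV : (starRingEnd ℂ) V = V := by
      have h1 : U * ((starRingEnd ℂ) V) = U * V := by rw [← hρdef, hρ1, hUV]
      exact mul_left_cancel₀ hU0 h1
    have hVim : V.im = 0 := Complex.conj_eq_iff_im.mp hcVV
    have hUeq : U = V⁻¹ := eq_inv_of_mul_eq_one_left hUV
    have hUim : U.im = 0 := by rw [hUeq]; exact inv_im_zero hVim
    rw [sq]
    simp [Complex.mul_im, hUim]
  · have hb : ∀ z : ℂ, Polynomial.aeval z (minpoly ℚ m) = 0 → Complex.abs z ≤ 1 := by
      intro z hz
      obtain ⟨σ, hσ⟩ := exists_emb hS hmM hz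
      have hrel : (⟨ρ, hρM⟩ : M) = 1 + 2 * ⟨m, hmM⟩ := by
        apply Subtype.ext; push_cast; exact hρm
      have hσρ : σ ⟨ρ, hρM⟩ = 1 + 2 * z := by
        rw [hrel, map_add, map_mul, map_one, map_ofNat, hσ]
      have h1 := hbound σ
      rw [hσρ] at h1
      have h2 : Complex.abs (2 * z) ≤ Complex.abs (1 + 2*z) + 1 := by
        calc Complex.abs (2 * z) = Complex.abs ((1 + 2*z) + (-1)) := by ring_nf
          _ ≤ Complex.abs (1 + 2*z) + Complex.abs (-1) := Complex.abs.add_le _ _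
          _ = Complex.abs (1 + 2*z) + 1 := by simp
      rw [h1] at h2
      have h3 : Complex.abs (2*z) = 2 * Complex.abs z := by
        rw [map_mul]; simp
      linarith [h3 ▸ h2]
    have habs_m : Complex.abs m = 1 := kronecker hmint hm0 hb
    have habs_ρ : Complex.abs ρ = 1 := by
      have := hbound (IntermediateField.val M)
      exact this
    -- deduce m = -1
    have hnorm : Complex.normSq ρ = 1 := by
      have : Complex.abs ρ ^ 2 = 1 := by rw [habs_ρ]; norm_num
      rwa [Complex.sq_abs] at this
    have hnm : Complex.normSq m = 1 := by
      have : Complex.abs m ^ 2 = 1 := by rw [habs_m]; norm_num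
      rwa [Complex.sq_abs] at this
    have hre : m.re = -1 := by
      have h1 : Complex.normSq ρ = 1 + 4 * m.re + 4 * Complex.normSq m := by
        rw [hρm]
        simp [Complex.normSq_apply]
        ring
      rw [hnorm, hnm] at h1
      linarith
    have him0 : m.im = 0 := by
      have := Complex.normSq_apply m
      rw [hnm, hre] at this
      nlinarith [sq_nonneg m.im]
    have hm1 : m = -1 := Complex.ext (by rw [hre]; simp) (by rw [him0]; simp)
    have hρneg : ρ = -1 := by rw [hρm, hm1]; ring
    have hcVV : (starRingEnd ℂ) V = -V := by
      have h1 : U * ((starRingEnd ℂ) V) = U * (-V) := by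
        rw [← hρdef, hρneg, mul_neg, hUV]
      exact mul_left_cancel₀ hU0 h1
    have hVre : V.re = 0 := by
      have h2 := congrArg Complex.re hcVV
      simp only [Complex.conj_re, Complex.neg_re] at h2
      linarith
    have hUeq : U = V⁻¹ := eq_inv_of_mul_eq_one_left hUV
    have hV2im : (V^2).im = 0 := by rw [sq]; simp [Complex.mul_im, hVre]
    rw [hUeq, inv_pow]
    exact inv_im_zero hV2im


-- ===================== consequences for X1 =====================

lemma X1_im_zero {x : ℂ} (hx : x ∈ X1 QtrI) : x.im = 0 := by
  obtain ⟨hxO, u₁, u₂, u₃, u₄, heq⟩ := hx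
  have h1 := unit_sq_real u₁
  have h2 := unit_sq_real u₂
  have h3 := unit_sq_real u₃
  have h4 := unit_sq_real u₄
  have him := congrArg Complex.im heq
  simp only [Complex.mul_im, Complex.sub_im, Complex.add_im, h1, h2, h3, h4] at him
  norm_num at him
  exact him

lemma mem_ringOfInt_of_tr_int {α : ℂ} (hT : TotallyRealNum α) (hI : IsIntegral ℤ α) :
    α ∈ ringOfInt QtrI := ⟨tr_mem_QtrI hT, hI⟩

lemma four_mem : (4:ℂ) ∈ ringOfInt QtrI :=
  ⟨by exact_mod_cast natCast_mem QtrI 4, by exact_mod_cast int_int 4⟩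

lemma zero_mem_X1 : (0:ℂ) ∈ X1 QtrI := by
  refine ⟨(ringOfInt QtrI).zero_mem, 1, 1, 1, 1, ?_⟩
  norm_num

/-- the unit `2μ + √(4μ²+1)` of `R_{2,L}`, for `μ` a totally real integer -/
lemma special_unit {μ : ℂ} (hT : TotallyRealNum μ) (hI : IsIntegral ℤ μ) :
    ∃ (h : ℂ) (u v : (Rring 2 twoNZ QtrI)ˣ), h ^ 2 = 4 * μ ^ 2 + 1 ∧
      ((u : Rring 2 twoNZ QtrI) : ℂ) = 2 * μ + h ∧
      ((v : Rring 2 twoNZ QtrI) : ℂ) = -(2 * μ) + h := by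
  obtain ⟨h, hsq, hhT, hhI⟩ := sqrt_special hT hI
  have hμQ : μ ∈ QtrI := tr_mem_QtrI hT
  have hhQ : h ∈ QtrI := tr_mem_QtrI hhT
  have h2Q : (2:ℂ) ∈ QtrI := by exact_mod_cast natCast_mem QtrI 2
  have h2I : IsIntegral ℤ (2:ℂ) := by exact_mod_cast int_int 2
  have hgI : IsIntegral ℤ ((h - 1)/2) := by
    apply integral_of_quadratic (b := 1) (c := -μ^2) isIntegral_one ((hI.pow 2).neg)
    linear_combination hsq / 4
  have hgQ : (h - 1)/2 ∈ QtrI := div_mem (sub_mem hhQ (one_mem QtrI)) h2Q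
  have hgO : (h - 1)/2 ∈ ringOfInt QtrI := ⟨hgQ, hgI⟩
  have hμO : μ ∈ ringOfInt QtrI := ⟨hμQ, hI⟩
  have heO : 2 * μ + h ∈ ringOfInt QtrI :=
    ⟨add_mem (mul_mem h2Q hμQ) hhQ, (h2I.mul hI).add hhI⟩
  have heO2 : -(2 * μ) + h ∈ ringOfInt QtrI :=
    ⟨add_mem (neg_mem (mul_mem h2Q hμQ)) hhQ, ((h2I.mul hI).neg).add hhI⟩
  have heR : 2 * μ + h ∈ Rring 2 twoNZ QtrI := by
    apply Rset_norm twoNZ heO ((ringOfInt QtrI).add_mem hμO hgO) (j := 1)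
    push_cast
    ring
  have heR2 : -(2 * μ) + h ∈ Rring 2 twoNZ QtrI := by
    apply Rset_norm twoNZ heO2 ((ringOfInt QtrI).add_mem ((ringOfInt QtrI).neg_mem hμO) hgO)
      (j := 1)
    push_cast
    ring
  have hprod : (2 * μ + h) * (-(2 * μ) + h) = 1 := by linear_combination hsq
  have hprod' : (-(2 * μ) + h) * (2 * μ + h) = 1 := by linear_combination hsq
  refine ⟨h, ⟨⟨2*μ+h, heR⟩, ⟨-(2*μ)+h, heR2⟩, Subtype.ext hprod, Subtype.ext hprod'⟩,
    ⟨⟨-(2*μ)+h, heR2⟩, ⟨2*μ+h, heR⟩, Subtype.ext hprod', Subtype.ext hprod⟩,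
    hsq, rfl, rfl⟩

lemma four_alpha_mem_X1 {α : ℂ} (hT : TotallyRealNum α) (hI : IsIntegral ℤ α) :
    4 * α ∈ X1 QtrI := by
  have hμT : TotallyRealNum (2*α+1) := ((tr_intCast 2).mul hT).add tr_one
  have hμI : IsIntegral ℤ (2*α+1) := by
    have h2I : IsIntegral ℤ (2:ℂ) := by exact_mod_cast int_int 2
    exact (h2I.mul hI).add isIntegral_one
  have hνT : TotallyRealNum (2*α-1) := ((tr_intCast 2).mul hT).sub tr_one
  have hνI : IsIntegral ℤ (2*α-1) := by
    have h2I : IsIntegral ℤ (2:ℂ) := by exact_mod_cast int_int 2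
    exact (h2I.mul hI).sub isIntegral_one
  obtain ⟨hμ, u₁, u₂, hsqμ, hu₁, hu₂⟩ := special_unit hμT hμI
  obtain ⟨hν, u₃, u₄, hsqν, hu₃, hu₄⟩ := special_unit hνT hνI
  refine ⟨(ringOfInt QtrI).mul_mem four_mem (mem_ringOfInt_of_tr_int hT hI),
    u₁, u₂, u₃, u₄, ?_⟩
  rw [hu₁, hu₂, hu₃, hu₄]
  linear_combination -2 * hsqμ + 2 * hsqν

-- ===================== the main theorem =====================

/-- For `L = ℚ^tr(i)`, with `X₀, X₁, X` as above, `X = ℤ^tr`, the ring of all totally real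
algebraic integers, viewed as a subset of `O_L`. -/
theorem X_eq_Ztr : XX QtrI = {z : ℂ | TotallyRealNum z ∧ IsIntegral ℤ z} := by
  ext α
  constructor
  · rintro ⟨hαO, x₁, hx₁, x₂, hx₂, heq⟩
    have h1 := X1_im_zero hx₁
    have h2 := X1_im_zero hx₂
    have h4 : (4 * α).im = 0 := by
      rw [heq]
      simp [Complex.sub_im, h1, h2]
    have hαim : α.im = 0 := by
      simpa [Complex.mul_im] using h4
    exact ⟨real_of_QtrI hαO.1 hαim, hαO.2⟩
  · rintro ⟨hT, hI⟩
    refine ⟨mem_ringOfInt_of_tr_int hT hI, 4 * α, four_alpha_mem_X1 hT hI,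
      0, zero_mem_X1, by ring⟩

end
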